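/- arXiv:2012.09047 — 2 statements merged into one kernel-verified Lean document; each statement's English description precedes it below -/
import Mathlib

section
/- Let K ⊆ ℝ be compact and f₁,…,f_m: K → K continuous and non-decreasing, such that for every a₁a₂a₃… ∈ {1,…,m}^ω the diameter of f_{a₁}∘…∘f_{a_n}(K) tends to 0. Then there exists a continuous metric d on K such that each f_i is d-contracting and, moreover, for all x ≤ s ≤ t ≤ y in K, d(s,t) ≤ d(x,y). -/
open Filter Topology

/-- Composition `f_{a₁} ∘ f_{a₂} ∘ … ∘ f_{a_n}` of a family of maps along a finite word. -/
def wordComp {I : Type*} (f : I → ℝ → ℝ) : List I → ℝ → ℝ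
  | [] => id
  | a :: t => f a ∘ wordComp f t

/-!
Let `δₙ(x, y)` be the largest distance between `f_w x` and `f_w y` over the words `w` of length
`n`, and put `d = ⨆ₙ cₙ δₙ` for bounded, strictly increasing weights `cₙ` with `c₀ = 1`.
Each `δₙ` is a continuous pseudometric, and it satisfies the interval property because every `f_w`
is non-decreasing. Compactness of the space of infinite words (König's lemma) turns the hypothesis
on diameters into `δₙ → 0` uniformly on `K × K`; hence `d` is continuous and the supremum defining
`d (f_i x) (f_i y)` is attained at some `m`. Since `δₘ (f_i x) (f_i y) ≤ δₘ₊₁ x y`, this gives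
`d (f_i x) (f_i y) ≤ cₘ δₘ₊₁ x y < cₘ₊₁ δₘ₊₁ x y ≤ d x y`, unless `δₘ₊₁ x y = 0`, in which case
`d (f_i x) (f_i y) = 0 < |x - y| ≤ d x y`.
-/

theorem Filter.Tendsto.exists_forall_ge_of_forall_le {α : Type*} [LinearOrder α]
    [TopologicalSpace α] [OrderTopology α] {b : ℕ → α} {a : α}
    (hb : Tendsto b atTop (𝓝 a)) (ha : ∀ n, a ≤ b n) : ∃ m, ∀ n, b n ≤ b m := by
  by_cases h : ∃ m, a < b m
  · obtain ⟨m, hm⟩ := h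
    refine (continuous_of_discreteTopology (f := b)).exists_forall_ge' m ?_
    rw [cocompact_eq_atTop]
    exact (hb.eventually (gt_mem_nhds hm)).mono fun _ => le_of_lt
  · simp only [not_exists, not_lt] at h
    exact ⟨0, fun n => (h n).trans (ha 0)⟩

theorem ContinuousOn.ciSup_of_tendstoUniformlyOn_zero {X : Type*} [TopologicalSpace X]
    {s : Set X} {g : ℕ → X → ℝ} (hc : ∀ n, ContinuousOn (g n) s)
    (h0 : ∀ n, ∀ x ∈ s, 0 ≤ g n x) (hu : TendstoUniformlyOn g 0 atTop s) :
    ContinuousOn (fun x => ⨆ n, g n x) s := by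
  refine TendstoUniformlyOn.continuousOn (F := fun N x => partialSups (g · x) N) (p := atTop) ?_
    (Frequently.of_forall fun N => ContinuousOn.partialSups_apply fun k _ => hc k)
  rw [Metric.tendstoUniformlyOn_iff] at hu ⊢
  intro ε hε
  obtain ⟨N₀, hN₀⟩ := eventually_atTop.1 (hu (ε / 2) (half_pos hε))
  filter_upwards [eventually_ge_atTop N₀] with N hN x hx
  have hbound : ∀ n, g n x ≤ partialSups (g · x) N + ε / 2 := by
    intro n
    have hP : 0 ≤ partialSups (g · x) N :=
      (h0 0 x hx).trans (le_partialSups_of_le (g · x) (Nat.zero_le N))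
    rcases le_total n N with hn | hn
    · linarith [le_partialSups_of_le (g · x) hn]
    · have := hN₀ n (hN.trans hn) x hx
      rw [Pi.zero_apply, dist_zero_left, Real.norm_of_nonneg (h0 n x hx)] at this
      linarith
  have hle : partialSups (g · x) N ≤ ⨆ n, g n x :=
    partialSups_le_iff.2 fun n _ => le_ciSup ⟨_, Set.forall_mem_range.2 hbound⟩ n
  have hge : ⨆ n, g n x ≤ partialSups (g · x) N + ε / 2 := ciSup_le hbound
  rw [Real.dist_eq, abs_lt]
  constructor <;> linarith

/-- König's lemma, proved by compactness of `ℕ → I`. -/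
theorem exists_seq_forall_ofFn_of_forall_exists {I : Type*} [Finite I] {P : List I → Prop}
    (hP : ∀ w t, P (w ++ t) → P w) (h : ∀ n, ∃ w : Fin n → I, P (List.ofFn w)) :
    ∃ a : ℕ → I, ∀ n, P (List.ofFn fun i : Fin n => a i) := by
  obtain ⟨w₁, -⟩ := h 1
  have : Nonempty I := ⟨w₁ 0⟩
  let : TopologicalSpace I := ⊥
  have : DiscreteTopology I := ⟨rfl⟩
  let S : ℕ → Set (ℕ → I) := fun n => {a | P (List.ofFn fun i : Fin n => a i)}
  have hS_succ : ∀ n, S (n + 1) ⊆ S n := fun n a ha =>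
    hP _ [a n] (by
      simp only [S, List.ofFn_succ', List.concat_eq_append] at ha
      exact ha)
  have hS_nonempty : ∀ n, (S n).Nonempty := fun n => by
    obtain ⟨w, hw⟩ := h n
    refine ⟨fun k => if hk : k < n then w ⟨k, hk⟩ else Classical.arbitrary I, ?_⟩
    simpa [S] using hw
  have hS_closed : ∀ n, IsClosed (S n) := fun n =>
    (isClosed_discrete {v : Fin n → I | P (List.ofFn v)}).preimage
      (f := fun (a : ℕ → I) (i : Fin n) => a i) (continuous_pi fun i => continuous_apply (i : ℕ))
  obtain ⟨a, ha⟩ := IsCompact.nonempty_iInter_of_sequence_nonempty_isCompact_isClosed S hS_succ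
    hS_nonempty (hS_closed 0).isCompact hS_closed
  exact ⟨a, Set.mem_iInter.1 ha⟩

section Words

variable {I : Type*} (f : I → ℝ → ℝ) {K : Set ℝ}

theorem wordComp_append (s t : List I) :
    wordComp f (s ++ t) = wordComp f s ∘ wordComp f t := by
  induction s with
  | nil => rfl
  | cons a s ih => simp [wordComp, ih, Function.comp_assoc]

theorem mapsTo_wordComp (hfm : ∀ i, Set.MapsTo (f i) K K) :
    ∀ w : List I, Set.MapsTo (wordComp f w) K K
  | [] => Set.mapsTo_id K
  | a :: t => (hfm a).comp (mapsTo_wordComp hfm t)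

theorem monotoneOn_wordComp (hfm : ∀ i, Set.MapsTo (f i) K K)
    (hmono : ∀ i, MonotoneOn (f i) K) : ∀ w : List I, MonotoneOn (wordComp f w) K
  | [] => monotoneOn_id
  | a :: t => (hmono a).comp (monotoneOn_wordComp hfm hmono t) (mapsTo_wordComp f hfm t)

theorem continuousOn_wordComp (hfc : ∀ i, ContinuousOn (f i) K)
    (hfm : ∀ i, Set.MapsTo (f i) K K) : ∀ w : List I, ContinuousOn (wordComp f w) K
  | [] => continuousOn_id
  | a :: t => (hfc a).comp (continuousOn_wordComp hfc hfm t) (mapsTo_wordComp f hfm t)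

theorem diam_image_wordComp_append_le (hK : Bornology.IsBounded K)
    (hfm : ∀ i, Set.MapsTo (f i) K K) (s t : List I) :
    Metric.diam (wordComp f (s ++ t) '' K) ≤ Metric.diam (wordComp f s '' K) := by
  rw [wordComp_append, Set.image_comp]
  exact Metric.diam_mono (Set.image_mono (mapsTo_wordComp f hfm t).image_subset)
    (hK.subset (mapsTo_wordComp f hfm s).image_subset)

theorem exists_forall_diam_image_wordComp_lt [Finite I] (hK : Bornology.IsBounded K)
    (hfm : ∀ i, Set.MapsTo (f i) K K)
    (hdiam : ∀ a : ℕ → I,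
      Tendsto (fun n : ℕ => Metric.diam (wordComp f (List.ofFn fun i : Fin n => a i) '' K))
        atTop (𝓝 0))
    {ε : ℝ} (hε : 0 < ε) :
    ∃ N, ∀ n ≥ N, ∀ w : Fin n → I, Metric.diam (wordComp f (List.ofFn w) '' K) < ε := by
  obtain ⟨N, hN⟩ : ∃ N, ∀ w : Fin N → I, Metric.diam (wordComp f (List.ofFn w) '' K) < ε := by
    by_contra! h
    obtain ⟨a, ha⟩ := exists_seq_forall_ofFn_of_forall_exists
      (P := fun w => ε ≤ Metric.diam (wordComp f w '' K))
      (fun w t hwt => hwt.trans (diam_image_wordComp_append_le f hK hfm w t)) h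
    obtain ⟨n, hn⟩ := ((hdiam a).eventually_lt_const hε).exists
    exact (ha n).not_gt hn
  refine ⟨N, fun n hn w => ?_⟩
  obtain ⟨k, rfl⟩ := Nat.exists_eq_add_of_le hn
  rw [List.ofFn_add]
  exact (diam_image_wordComp_append_le f hK hfm _ _).trans_lt (hN _)

end Words

section WordDist

variable {I : Type*} [Fintype I] [Nonempty I] (f : I → ℝ → ℝ) {K : Set ℝ}

noncomputable def wordDist (n : ℕ) (x y : ℝ) : ℝ :=
  Finset.univ.sup' Finset.univ_nonempty fun w : Fin n → I =>
    dist (wordComp f (List.ofFn w) x) (wordComp f (List.ofFn w) y)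

theorem dist_le_wordDist {n : ℕ} (x y : ℝ) (w : Fin n → I) :
    dist (wordComp f (List.ofFn w) x) (wordComp f (List.ofFn w) y) ≤ wordDist f n x y :=
  Finset.le_sup' (fun w : Fin n → I =>
    dist (wordComp f (List.ofFn w) x) (wordComp f (List.ofFn w) y)) (Finset.mem_univ w)

theorem wordDist_le {n : ℕ} {x y r : ℝ}
    (h : ∀ w : Fin n → I, dist (wordComp f (List.ofFn w) x) (wordComp f (List.ofFn w) y) ≤ r) :
    wordDist f n x y ≤ r :=
  Finset.sup'_le _ _ fun w _ => h w

theorem wordDist_nonneg (n : ℕ) (x y : ℝ) : 0 ≤ wordDist f n x y :=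
  dist_nonneg.trans (dist_le_wordDist f x y (Classical.arbitrary _))

theorem wordDist_zero (x y : ℝ) : wordDist f 0 x y = dist x y := by
  simp [wordDist, wordComp]

theorem wordDist_self (n : ℕ) (x : ℝ) : wordDist f n x x = 0 := by
  simp [wordDist]

theorem wordDist_comm (n : ℕ) (x y : ℝ) : wordDist f n x y = wordDist f n y x := by
  simp only [wordDist, dist_comm]

theorem wordDist_triangle (n : ℕ) (x y z : ℝ) :
    wordDist f n x z ≤ wordDist f n x y + wordDist f n y z :=
  wordDist_le f fun w => (dist_triangle _ _ _).trans
    (add_le_add (dist_le_wordDist f x y w) (dist_le_wordDist f y z w))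

theorem wordDist_le_diam (hK : Bornology.IsBounded K) (hfm : ∀ i, Set.MapsTo (f i) K K)
    (n : ℕ) {x y : ℝ} (hx : x ∈ K) (hy : y ∈ K) : wordDist f n x y ≤ Metric.diam K :=
  wordDist_le f fun _ =>
    Metric.dist_le_diam_of_mem hK (mapsTo_wordComp f hfm _ hx) (mapsTo_wordComp f hfm _ hy)

theorem wordDist_apply_le (n : ℕ) (i : I) (x y : ℝ) :
    wordDist f n (f i x) (f i y) ≤ wordDist f (n + 1) x y := by
  refine wordDist_le f fun w => ?_
  have hsnoc : ∀ z, wordComp f (List.ofFn w) (f i z) =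
      wordComp f (List.ofFn (Fin.snoc w i : Fin (n + 1) → I)) z := fun z => by
    rw [List.ofFn_succ']
    simp [List.concat_eq_append, wordComp_append, wordComp]
  rw [hsnoc, hsnoc]
  exact dist_le_wordDist f x y _

theorem wordDist_le_of_nested (hfm : ∀ i, Set.MapsTo (f i) K K)
    (hmono : ∀ i, MonotoneOn (f i) K) (n : ℕ) {x s t y : ℝ} (hx : x ∈ K) (hs : s ∈ K)
    (ht : t ∈ K) (hy : y ∈ K) (hxs : x ≤ s) (hst : s ≤ t) (hty : t ≤ y) :
    wordDist f n s t ≤ wordDist f n x y := by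
  refine wordDist_le f fun w => le_trans ?_ (dist_le_wordDist f x y w)
  set g := wordComp f (List.ofFn w)
  have hg := monotoneOn_wordComp f hfm hmono (List.ofFn w)
  have hxs' := hg hx hs hxs
  have hst' := hg hs ht hst
  have hty' := hg ht hy hty
  calc dist (g s) (g t) ≤ g y - g x :=
        Real.dist_le_of_mem_Icc ⟨hxs', hst'.trans hty'⟩ ⟨hxs'.trans hst', hty'⟩
    _ ≤ dist (g x) (g y) := by
        rw [dist_comm, Real.dist_eq]
        exact le_abs_self _

theorem continuousOn_wordDist (hfc : ∀ i, ContinuousOn (f i) K)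
    (hfm : ∀ i, Set.MapsTo (f i) K K) (n : ℕ) :
    ContinuousOn (fun p : ℝ × ℝ => wordDist f n p.1 p.2) (K ×ˢ K) := by
  refine ContinuousOn.finset_sup'_apply _ fun w _ => ?_
  have hw := continuousOn_wordComp f hfc hfm (List.ofFn w)
  exact continuous_dist.comp_continuousOn
    ((hw.comp continuousOn_fst fun p hp => hp.1).prodMk
      (hw.comp continuousOn_snd fun p hp => hp.2))

theorem exists_forall_wordDist_lt (hK : Bornology.IsBounded K)
    (hfm : ∀ i, Set.MapsTo (f i) K K)
    (hdiam : ∀ a : ℕ → I,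
      Tendsto (fun n : ℕ => Metric.diam (wordComp f (List.ofFn fun i : Fin n => a i) '' K))
        atTop (𝓝 0))
    {ε : ℝ} (hε : 0 < ε) : ∃ N, ∀ n ≥ N, ∀ x ∈ K, ∀ y ∈ K, wordDist f n x y < ε := by
  obtain ⟨N, hN⟩ := exists_forall_diam_image_wordComp_lt f hK hfm hdiam hε
  refine ⟨N, fun n hn x hx y hy => (Finset.sup'_lt_iff _).2 fun w _ => ?_⟩
  have hw := mapsTo_wordComp f hfm (List.ofFn w)
  exact (Metric.dist_le_diam_of_mem (hK.subset hw.image_subset) (Set.mem_image_of_mem _ hx)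
    (Set.mem_image_of_mem _ hy)).trans_lt (hN n hn w)

end WordDist

noncomputable def weight (n : ℕ) : ℝ := 2 - 2⁻¹ ^ n

theorem weight_zero : weight 0 = 1 := by norm_num [weight]

theorem weight_pos (n : ℕ) : 0 < weight n := by
  have : (2⁻¹ : ℝ) ^ n ≤ 1 := pow_le_one₀ (by norm_num) (by norm_num)
  rw [weight]
  linarith

theorem weight_le_two (n : ℕ) : weight n ≤ 2 := by
  have : (0 : ℝ) < 2⁻¹ ^ n := by positivity
  rw [weight]
  linarith

theorem strictMono_weight : StrictMono weight := fun m n hmn => by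
  have : (2⁻¹ : ℝ) ^ n < 2⁻¹ ^ m := pow_lt_pow_right_of_lt_one₀ (by norm_num) (by norm_num) hmn
  simp only [weight]
  linarith

section WordMetric

variable {I : Type*} [Fintype I] [Nonempty I] (f : I → ℝ → ℝ) {K : Set ℝ}

noncomputable def wordMetric (x y : ℝ) : ℝ := ⨆ n, weight n * wordDist f n x y

theorem weight_mul_wordDist_le_wordMetric (hK : Bornology.IsBounded K)
    (hfm : ∀ i, Set.MapsTo (f i) K K) {x y : ℝ} (hx : x ∈ K) (hy : y ∈ K) (n : ℕ) :
    weight n * wordDist f n x y ≤ wordMetric f x y := by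
  refine le_ciSup (f := fun n => weight n * wordDist f n x y)
    ⟨2 * Metric.diam K, Set.forall_mem_range.2 fun m => ?_⟩ n
  exact mul_le_mul (weight_le_two m) (wordDist_le_diam f hK hfm m hx hy)
    (wordDist_nonneg f m x y) zero_le_two

theorem dist_le_wordMetric (hK : Bornology.IsBounded K)
    (hfm : ∀ i, Set.MapsTo (f i) K K) {x y : ℝ} (hx : x ∈ K) (hy : y ∈ K) :
    dist x y ≤ wordMetric f x y := by
  simpa [weight_zero, wordDist_zero] using weight_mul_wordDist_le_wordMetric f hK hfm hx hy 0

theorem wordMetric_nonneg (hK : Bornology.IsBounded K) (hfm : ∀ i, Set.MapsTo (f i) K K)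
    {x y : ℝ} (hx : x ∈ K) (hy : y ∈ K) : 0 ≤ wordMetric f x y :=
  dist_nonneg.trans (dist_le_wordMetric f hK hfm hx hy)

theorem wordMetric_self (x : ℝ) : wordMetric f x x = 0 := by
  simp [wordMetric, wordDist_self]

theorem wordMetric_eq_zero_iff (hK : Bornology.IsBounded K) (hfm : ∀ i, Set.MapsTo (f i) K K)
    {x y : ℝ} (hx : x ∈ K) (hy : y ∈ K) : wordMetric f x y = 0 ↔ x = y := by
  refine ⟨fun h => dist_le_zero.1 ?_, fun h => h ▸ wordMetric_self f x⟩
  exact h ▸ dist_le_wordMetric f hK hfm hx hy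

theorem wordMetric_comm (x y : ℝ) : wordMetric f x y = wordMetric f y x := by
  simp only [wordMetric, wordDist_comm f _ x y]

theorem wordMetric_triangle (hK : Bornology.IsBounded K) (hfm : ∀ i, Set.MapsTo (f i) K K)
    {x y z : ℝ} (hx : x ∈ K) (hy : y ∈ K) (hz : z ∈ K) :
    wordMetric f x z ≤ wordMetric f x y + wordMetric f y z := by
  refine ciSup_le fun n => ?_
  calc weight n * wordDist f n x z
      ≤ weight n * wordDist f n x y + weight n * wordDist f n y z := by
        rw [← mul_add]
        exact mul_le_mul_of_nonneg_left (wordDist_triangle f n x y z) (weight_pos n).le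
    _ ≤ wordMetric f x y + wordMetric f y z :=
        add_le_add (weight_mul_wordDist_le_wordMetric f hK hfm hx hy n)
          (weight_mul_wordDist_le_wordMetric f hK hfm hy hz n)

theorem wordMetric_le_of_nested (hK : Bornology.IsBounded K)
    (hfm : ∀ i, Set.MapsTo (f i) K K) (hmono : ∀ i, MonotoneOn (f i) K) {x s t y : ℝ}
    (hx : x ∈ K) (hs : s ∈ K) (ht : t ∈ K) (hy : y ∈ K) (hxs : x ≤ s) (hst : s ≤ t)
    (hty : t ≤ y) : wordMetric f s t ≤ wordMetric f x y :=
  ciSup_le fun n => (mul_le_mul_of_nonneg_left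
    (wordDist_le_of_nested f hfm hmono n hx hs ht hy hxs hst hty) (weight_pos n).le).trans
    (weight_mul_wordDist_le_wordMetric f hK hfm hx hy n)

theorem tendstoUniformlyOn_weight_mul_wordDist (hK : Bornology.IsBounded K)
    (hfm : ∀ i, Set.MapsTo (f i) K K)
    (hdiam : ∀ a : ℕ → I,
      Tendsto (fun n : ℕ => Metric.diam (wordComp f (List.ofFn fun i : Fin n => a i) '' K))
        atTop (𝓝 0)) :
    TendstoUniformlyOn (fun n (p : ℝ × ℝ) => weight n * wordDist f n p.1 p.2) 0 atTop
      (K ×ˢ K) := by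
  rw [Metric.tendstoUniformlyOn_iff]
  intro ε hε
  obtain ⟨N, hN⟩ := exists_forall_wordDist_lt f hK hfm hdiam (half_pos hε)
  filter_upwards [eventually_ge_atTop N] with n hn p hp
  have hδ := hN n hn p.1 hp.1 p.2 hp.2
  have hδ0 := wordDist_nonneg f n p.1 p.2
  rw [Pi.zero_apply, dist_zero_left, Real.norm_of_nonneg (mul_nonneg (weight_pos n).le hδ0)]
  nlinarith [weight_le_two n]

theorem continuousOn_wordMetric (hfc : ∀ i, ContinuousOn (f i) K)
    (hfm : ∀ i, Set.MapsTo (f i) K K)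
    (hu : TendstoUniformlyOn (fun n (p : ℝ × ℝ) => weight n * wordDist f n p.1 p.2) 0 atTop
      (K ×ˢ K)) :
    ContinuousOn (fun p : ℝ × ℝ => wordMetric f p.1 p.2) (K ×ˢ K) :=
  ContinuousOn.ciSup_of_tendstoUniformlyOn_zero
    (fun n => continuousOn_const.mul (continuousOn_wordDist f hfc hfm n))
    (fun n p _ => mul_nonneg (weight_pos n).le (wordDist_nonneg f n p.1 p.2)) hu

theorem wordMetric_apply_lt (hK : Bornology.IsBounded K) (hfm : ∀ i, Set.MapsTo (f i) K K)
    (hu : TendstoUniformlyOn (fun n (p : ℝ × ℝ) => weight n * wordDist f n p.1 p.2) 0 atTop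
      (K ×ˢ K))
    (i : I) {x y : ℝ} (hx : x ∈ K) (hy : y ∈ K) (hxy : x ≠ y) :
    wordMetric f (f i x) (f i y) < wordMetric f x y := by
  obtain ⟨m, hm⟩ :=
    (hu.tendsto_at (Set.mk_mem_prod (hfm i hx) (hfm i hy))).exists_forall_ge_of_forall_le
      fun n => mul_nonneg (weight_pos n).le (wordDist_nonneg f n _ _)
  have hle : wordMetric f (f i x) (f i y) ≤ weight m * wordDist f (m + 1) x y :=
    (ciSup_le hm).trans
      (mul_le_mul_of_nonneg_left (wordDist_apply_le f m i x y) (weight_pos m).le)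
  rcases (wordDist_nonneg f (m + 1) x y).eq_or_lt with hzero | hpos
  · calc wordMetric f (f i x) (f i y) ≤ 0 := by simpa [← hzero] using hle
      _ < dist x y := dist_pos.2 hxy
      _ ≤ wordMetric f x y := dist_le_wordMetric f hK hfm hx hy
  · calc wordMetric f (f i x) (f i y) ≤ weight m * wordDist f (m + 1) x y := hle
      _ < weight (m + 1) * wordDist f (m + 1) x y :=
        mul_lt_mul_of_pos_right (strictMono_weight m.lt_succ_self) hpos
      _ ≤ wordMetric f x y := weight_mul_wordDist_le_wordMetric f hK hfm hx hy (m + 1)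

end WordMetric

theorem exists_contracting_monotone_metric_general
    {I : Type*} [Fintype I] [Nonempty I]
    (K : Set ℝ) (hK : IsCompact K)
    (f : I → ℝ → ℝ)
    (hfc : ∀ i, ContinuousOn (f i) K)
    (hfm : ∀ i, Set.MapsTo (f i) K K)
    (hmono : ∀ i, ∀ x ∈ K, ∀ y ∈ K, x ≤ y → f i x ≤ f i y)
    (hdiam : ∀ a : ℕ → I,
      Tendsto
        (fun n : ℕ =>
          Metric.diam (wordComp f (List.ofFn fun i : Fin n => a i) '' K))
        atTop (𝓝 0)) :
    ∃ d : ℝ → ℝ → ℝ,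
      ContinuousOn (fun p : ℝ × ℝ => d p.1 p.2) (K ×ˢ K) ∧
      (∀ x ∈ K, ∀ y ∈ K, 0 ≤ d x y) ∧
      (∀ x ∈ K, ∀ y ∈ K, (d x y = 0 ↔ x = y)) ∧
      (∀ x ∈ K, ∀ y ∈ K, d x y = d y x) ∧
      (∀ x ∈ K, ∀ y ∈ K, ∀ z ∈ K, d x z ≤ d x y + d y z) ∧
      (∀ i, ∀ x ∈ K, ∀ y ∈ K, x ≠ y → d (f i x) (f i y) < d x y) ∧
      (∀ x ∈ K, ∀ s ∈ K, ∀ t ∈ K, ∀ y ∈ K,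
        x ≤ s → s ≤ t → t ≤ y → d s t ≤ d x y) := by
  have hKb := hK.isBounded
  have hu := tendstoUniformlyOn_weight_mul_wordDist f hKb hfm hdiam
  exact ⟨wordMetric f, continuousOn_wordMetric f hfc hfm hu,
    fun x hx y hy => wordMetric_nonneg f hKb hfm hx hy,
    fun x hx y hy => wordMetric_eq_zero_iff f hKb hfm hx hy,
    fun x _ y _ => wordMetric_comm f x y,
    fun x hx y hy z hz => wordMetric_triangle f hKb hfm hx hy hz,
    fun i x hx y hy => wordMetric_apply_lt f hKb hfm hu i hx hy,
    fun x hx s hs t ht y hy => wordMetric_le_of_nested f hKb hfm hmono hx hs ht hy⟩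

theorem exists_contracting_monotone_metric
    {I : Type*} [Fintype I] [Nonempty I]
    (K : Set ℝ) (hK : IsCompact K) (hne : K.Nonempty)
    (f : I → ℝ → ℝ)
    (hfc : ∀ i, ContinuousOn (f i) K)
    (hfm : ∀ i, Set.MapsTo (f i) K K)
    (hmono : ∀ i, ∀ x ∈ K, ∀ y ∈ K, x ≤ y → f i x ≤ f i y)
    (hdiam : ∀ a : ℕ → I,
      Tendsto
        (fun n : ℕ =>
          Metric.diam (wordComp f (List.ofFn fun i : Fin n => a i) '' K))
        atTop (𝓝 0)) :
    ∃ d : ℝ → ℝ → ℝ,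
      ContinuousOn (fun p : ℝ × ℝ => d p.1 p.2) (K ×ˢ K) ∧
      (∀ x ∈ K, ∀ y ∈ K, 0 ≤ d x y) ∧
      (∀ x ∈ K, ∀ y ∈ K, (d x y = 0 ↔ x = y)) ∧
      (∀ x ∈ K, ∀ y ∈ K, d x y = d y x) ∧
      (∀ x ∈ K, ∀ y ∈ K, ∀ z ∈ K, d x z ≤ d x y + d y z) ∧
      (∀ i, ∀ x ∈ K, ∀ y ∈ K, x ≠ y → d (f i x) (f i y) < d x y) ∧
      (∀ x ∈ K, ∀ s ∈ K, ∀ t ∈ K, ∀ y ∈ K,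
        x ≤ s → s ≤ t → t ≤ y → d s t ≤ d x y) :=
  exists_contracting_monotone_metric_general K hK f hfc hfm hmono hdiam
end

section
/- Let K ⊆ ℝ be compact and f₁,…,f_m: K → K a contracting base, i.e., continuous functions that are all d-contracting for some continuous metric d on K. Then for every a₁a₂a₃… ∈ {1,…,m}^ω, the intersection ⋂_{n≥1} f_{a₁}∘…∘f_{a_n}(K) contains exactly one point, and for every x ∈ K the sequence f_{a₁}∘…∘f_{a_n}(x) converges to that point. -/
open Filter Topology

lemma wordComp_append_s14 {I : Type*} (f : I → ℝ → ℝ) (l₁ l₂ : List I) (x : ℝ) :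
    wordComp f (l₁ ++ l₂) x = wordComp f l₁ (wordComp f l₂ x) := by
  induction l₁ with
  | nil => rfl
  | cons b t ih => simp [wordComp, ih]

lemma wordComp_mapsTo {I : Type*} (f : I → ℝ → ℝ) {K : Set ℝ}
    (h : ∀ i, Set.MapsTo (f i) K K) : ∀ l : List I, Set.MapsTo (wordComp f l) K K
  | [] => Set.mapsTo_id K
  | b :: t => (h b).comp (wordComp_mapsTo f h t)

lemma wordComp_continuousOn {I : Type*} (f : I → ℝ → ℝ) {K : Set ℝ}
    (hc : ∀ i, ContinuousOn (f i) K) (hm : ∀ i, Set.MapsTo (f i) K K) :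
    ∀ l : List I, ContinuousOn (wordComp f l) K
  | [] => continuousOn_id
  | b :: t => (hc b).comp (wordComp_continuousOn f hc hm t) (wordComp_mapsTo f hm t)

theorem contracting_base_intersection_singleton
    {I : Type*} [Fintype I] [Nonempty I]
    (K : Set ℝ) (hK : IsCompact K) (hne : K.Nonempty)
    (f : I → ℝ → ℝ)
    (hfc : ∀ i, ContinuousOn (f i) K)
    (hfm : ∀ i, Set.MapsTo (f i) K K)
    (d : ℝ → ℝ → ℝ)
    (hdc : ContinuousOn (fun p : ℝ × ℝ => d p.1 p.2) (K ×ˢ K))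
    (hd0 : ∀ x ∈ K, ∀ y ∈ K, 0 ≤ d x y)
    (hdeq : ∀ x ∈ K, ∀ y ∈ K, (d x y = 0 ↔ x = y))
    (hdsymm : ∀ x ∈ K, ∀ y ∈ K, d x y = d y x)
    (hdtri : ∀ x ∈ K, ∀ y ∈ K, ∀ z ∈ K, d x z ≤ d x y + d y z)
    (hcontr : ∀ i, ∀ x ∈ K, ∀ y ∈ K, x ≠ y → d (f i x) (f i y) < d x y)
    (a : ℕ → I) :
    ∃ z : ℝ,
      (⋂ n : ℕ, wordComp f (List.ofFn fun i : Fin (n + 1) => a i) '' K) = {z} ∧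
      ∀ x ∈ K,
        Tendsto (fun n : ℕ => wordComp f (List.ofFn fun i : Fin n => a i) x)
          atTop (𝓝 z) := by
  classical
  set g : ℕ → ℝ → ℝ := fun n => wordComp f (List.ofFn fun i : Fin n => a i) with hg
  have hgm : ∀ n, Set.MapsTo (g n) K K := fun n => wordComp_mapsTo f hfm _
  have hgc : ∀ n, ContinuousOn (g n) K := fun n => wordComp_continuousOn f hfc hfm _
  -- splitting of the word
  have hofn : ∀ n k : ℕ, (List.ofFn fun i : Fin (n + k) => a i)
      = (List.ofFn fun i : Fin n => a i) ++ (List.ofFn fun i : Fin k => a (n + i)) := by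
    intro n k
    rw [List.ofFn_add]
    congr 1
  have hsplit : ∀ n k x, g (n + k) x
      = g n (wordComp f (List.ofFn fun i : Fin k => a (n + i)) x) := by
    intro n k x
    simp only [hg, hofn n k, wordComp_append_s14]
  have hdself : ∀ x ∈ K, d x x = 0 := fun x hx => (hdeq x hx x hx).mpr rfl
  -- one-step monotonicity
  have hstep : ∀ i, ∀ x ∈ K, ∀ y ∈ K, d (f i x) (f i y) ≤ d x y := by
    intro i x hx y hy
    by_cases hxy : x = y
    · subst hxy
      rw [hdself x hx, hdself _ (hfm i hx)]
    · exact (hcontr i x hx y hy hxy).le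
  have hLmono : ∀ l : List I, ∀ x ∈ K, ∀ y ∈ K,
      d (wordComp f l x) (wordComp f l y) ≤ d x y := by
    intro l
    induction l with
    | nil => intro x hx y hy; exact le_refl _
    | cons b t ih =>
      intro x hx y hy
      calc d (wordComp f (b :: t) x) (wordComp f (b :: t) y)
          ≤ d (wordComp f t x) (wordComp f t y) :=
            hstep b _ (wordComp_mapsTo f hfm t hx) _ (wordComp_mapsTo f hfm t hy)
        _ ≤ d x y := ih x hx y hy
  -- global bound on d
  obtain ⟨p, hp, hpmax⟩ := (hK.prod hK).exists_isMaxOn (hne.prod hne) hdc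
  set C : ℝ := d p.1 p.2 with hC
  have hCb : ∀ x ∈ K, ∀ y ∈ K, d x y ≤ C := by
    intro x hx y hy
    exact hpmax (Set.mk_mem_prod hx hy)
  -- uniform decrease
  have hdrop : ∀ δ : ℝ, 0 < δ → ∃ ε : ℝ, 0 < ε ∧ ∀ i, ∀ x ∈ K, ∀ y ∈ K,
      δ ≤ d x y → d (f i x) (f i y) ≤ d x y - ε := by
    intro δ hδ
    have key : ∀ i : I, ∃ ε : ℝ, 0 < ε ∧ ∀ x ∈ K, ∀ y ∈ K,
        δ ≤ d x y → d (f i x) (f i y) ≤ d x y - ε := by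
      intro i
      set S : Set (ℝ × ℝ) := (K ×ˢ K) ∩ {q : ℝ × ℝ | δ ≤ d q.1 q.2} with hS
      have hScl : IsClosed S := by
        have hSeq : S = (K ×ˢ K) ∩ (fun q : ℝ × ℝ => d q.1 q.2) ⁻¹' (Set.Ici δ) := by
          ext q; simp [hS, Set.mem_preimage]
        rw [hSeq]
        exact hdc.preimage_isClosed_of_isClosed ((hK.prod hK).isClosed) isClosed_Ici
      have hScomp : IsCompact S := (hK.prod hK).of_isClosed_subset hScl Set.inter_subset_left
      have hSsub : S ⊆ K ×ˢ K := Set.inter_subset_left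
      rcases S.eq_empty_or_nonempty with hSe | hSne
      · refine ⟨1, one_pos, fun x hx y hy hδxy => ?_⟩
        have hmem : (x, y) ∈ S := ⟨Set.mk_mem_prod hx hy, hδxy⟩
        rw [hSe] at hmem
        exact absurd hmem (Set.notMem_empty _)
      · have h1 : ContinuousOn (fun q : ℝ × ℝ => (f i q.1, f i q.2)) S := by
          refine ContinuousOn.prodMk ?_ ?_
          · exact (hfc i).comp continuousOn_fst (fun q hq => (hSsub hq).1)
          · exact (hfc i).comp continuousOn_snd (fun q hq => (hSsub hq).2)
        have h2 : ContinuousOn (fun q : ℝ × ℝ => d (f i q.1) (f i q.2)) S :=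
          hdc.comp h1 (fun q hq => Set.mk_mem_prod (hfm i (hSsub hq).1) (hfm i (hSsub hq).2))
        have hφc : ContinuousOn (fun q : ℝ × ℝ => d q.1 q.2 - d (f i q.1) (f i q.2)) S :=
          (hdc.mono hSsub).sub h2
        obtain ⟨q, hq, hqmin⟩ := hScomp.exists_isMinOn hSne hφc
        have hq1 : q.1 ∈ K := (hSsub hq).1
        have hq2 : q.2 ∈ K := (hSsub hq).2
        have hqδ : δ ≤ d q.1 q.2 := hq.2
        have hqne : q.1 ≠ q.2 := by
          intro h
          rw [h, hdself q.2 hq2] at hqδ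
          linarith
        refine ⟨d q.1 q.2 - d (f i q.1) (f i q.2), by linarith [hcontr i q.1 hq1 q.2 hq2 hqne],
          fun x hx y hy hδxy => ?_⟩
        have hm := hqmin (⟨Set.mk_mem_prod hx hy, hδxy⟩ : (x, y) ∈ S)
        simp only [Set.mem_setOf_eq] at hm
        linarith
    choose ε hε1 hε2 using key
    refine ⟨Finset.univ.inf' Finset.univ_nonempty ε, ?_, ?_⟩
    · rw [Finset.lt_inf'_iff]
      exact fun i _ => hε1 i
    · intro i x hx y hy hδxy
      have h1 := hε2 i x hx y hy hδxy
      have h2 : Finset.univ.inf' Finset.univ_nonempty ε ≤ ε i :=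
        Finset.inf'_le _ (Finset.mem_univ i)
      linarith
  -- decay : d-diameter of images goes below any δ uniformly
  have hdsmall : ∀ δ : ℝ, 0 < δ → ∃ N : ℕ, ∀ n ≥ N, ∀ x ∈ K, ∀ y ∈ K,
      d (g n x) (g n y) < δ := by
    intro δ hδ
    obtain ⟨ε, hε, hεd⟩ := hdrop δ hδ
    have claim : ∀ n : ℕ, ∀ x ∈ K, ∀ y ∈ K,
        d (g n x) (g n y) < δ ∨ d (g n x) (g n y) ≤ d x y - n * ε := by
      intro n
      induction n with
      | zero =>
        intro x hx y hy
        right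
        show d (wordComp f (List.ofFn fun i : Fin 0 => a i) x)
          (wordComp f (List.ofFn fun i : Fin 0 => a i) y) ≤ d x y - (0 : ℕ) * ε
        simp [List.ofFn_zero, wordComp]
      | succ n ih =>
        intro x hx y hy
        have hx' : f (a n) x ∈ K := hfm _ hx
        have hy' : f (a n) y ∈ K := hfm _ hy
        have hgx : g (n + 1) x = g n (f (a n) x) := by
          have h := hsplit n 1 x
          simpa [wordComp, List.ofFn_succ] using h
        have hgy : g (n + 1) y = g n (f (a n) y) := by
          have h := hsplit n 1 y
          simpa [wordComp, List.ofFn_succ] using h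
        rcases ih _ hx' _ hy' with h | h
        · left; rw [hgx, hgy]; exact h
        · by_cases hlt : d (g (n + 1) x) (g (n + 1) y) < δ
          · exact Or.inl hlt
          · right
            push_neg at hlt
            rw [hgx, hgy] at hlt ⊢
            have hmono : d (g n (f (a n) x)) (g n (f (a n) y)) ≤ d (f (a n) x) (f (a n) y) :=
              hLmono _ _ hx' _ hy'
            have hδ' : δ ≤ d (f (a n) x) (f (a n) y) := le_trans hlt hmono
            have hδ'' : δ ≤ d x y := le_trans hδ' (hstep _ x hx y hy)
            have hd1 : d (f (a n) x) (f (a n) y) ≤ d x y - ε := hεd _ x hx y hy hδ''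
            push_cast
            linarith
    obtain ⟨N, hN⟩ := exists_nat_gt ((C - δ) / ε)
    refine ⟨N, fun n hn x hx y hy => ?_⟩
    rcases claim n x hx y hy with h | h
    · exact h
    · have h1 : (C - δ) / ε < (n : ℝ) := lt_of_lt_of_le hN (by exact_mod_cast hn)
      have h2 : C - δ < n * ε := by
        rw [div_lt_iff₀ hε] at h1
        linarith
      have h3 : d x y ≤ C := hCb x hx y hy
      linarith
  -- translate d-smallness into Euclidean smallness
  have hde : ∀ ε : ℝ, 0 < ε → ∃ δ : ℝ, 0 < δ ∧ ∀ x ∈ K, ∀ y ∈ K,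
      d x y < δ → |x - y| < ε := by
    intro ε hε
    set S : Set (ℝ × ℝ) := (K ×ˢ K) ∩ {q : ℝ × ℝ | ε ≤ |q.1 - q.2|} with hS
    have hScl : IsClosed S :=
      ((hK.prod hK).isClosed).inter
        (isClosed_le continuous_const ((continuous_fst.sub continuous_snd).abs))
    have hScomp : IsCompact S := (hK.prod hK).of_isClosed_subset hScl Set.inter_subset_left
    have hSsub : S ⊆ K ×ˢ K := Set.inter_subset_left
    rcases S.eq_empty_or_nonempty with hSe | hSne
    · refine ⟨1, one_pos, fun x hx y hy _ => ?_⟩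
      by_contra hcon
      push_neg at hcon
      have hmem : (x, y) ∈ S := ⟨Set.mk_mem_prod hx hy, hcon⟩
      rw [hSe] at hmem
      exact absurd hmem (Set.notMem_empty _)
    · obtain ⟨q, hq, hqmin⟩ := hScomp.exists_isMinOn hSne (hdc.mono hSsub)
      have hq1 : q.1 ∈ K := (hSsub hq).1
      have hq2 : q.2 ∈ K := (hSsub hq).2
      have hqne : q.1 ≠ q.2 := by
        intro h
        have h2 : ε ≤ |q.1 - q.2| := hq.2
        rw [h, sub_self, abs_zero] at h2
        linarith
      have hqpos : 0 < d q.1 q.2 := by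
        rcases lt_or_eq_of_le (hd0 q.1 hq1 q.2 hq2) with h | h
        · exact h
        · exact absurd ((hdeq q.1 hq1 q.2 hq2).mp h.symm) hqne
      refine ⟨d q.1 q.2, hqpos, fun x hx y hy hdxy => ?_⟩
      by_contra hcon
      push_neg at hcon
      have hm := hqmin (⟨Set.mk_mem_prod hx hy, hcon⟩ : (x, y) ∈ S)
      simp only at hm
      exact absurd hdxy (not_lt.mpr hm)
  -- uniform Euclidean smallness
  have Hunif : ∀ ε : ℝ, 0 < ε → ∃ N : ℕ, ∀ n ≥ N, ∀ x ∈ K, ∀ y ∈ K,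
      |g n x - g n y| < ε := by
    intro ε hε
    obtain ⟨δ, hδ, hδe⟩ := hde ε hε
    obtain ⟨N, hN⟩ := hdsmall δ hδ
    exact ⟨N, fun n hn x hx y hy =>
      hδe _ (hgm n hx) _ (hgm n hy) (hN n hn x hx y hy)⟩
  -- Cauchy sequence at a basepoint
  obtain ⟨x₀, hx₀⟩ := hne
  set u : ℕ → ℝ := fun n => g n x₀ with hu
  have huK : ∀ n, u n ∈ K := fun n => hgm n hx₀
  have hCauchy : CauchySeq u := by
    rw [Metric.cauchySeq_iff]
    intro ε hε
    obtain ⟨N, hN⟩ := Hunif ε hε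
    have key : ∀ j k : ℕ, j ≥ N → dist (u (j + k)) (u j) < ε := by
      intro j k hj
      have hw : wordComp f (List.ofFn fun i : Fin k => a (j + i)) x₀ ∈ K :=
        wordComp_mapsTo f hfm _ hx₀
      have heq : u (j + k) = g j (wordComp f (List.ofFn fun i : Fin k => a (j + i)) x₀) :=
        hsplit j k x₀
      rw [Real.dist_eq, heq]
      exact hN j hj _ hw x₀ hx₀
    refine ⟨N, fun m hm n hn => ?_⟩
    rcases le_total n m with h | h
    · obtain ⟨k, rfl⟩ := Nat.exists_eq_add_of_le h
      exact key n k hn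
    · obtain ⟨k, rfl⟩ := Nat.exists_eq_add_of_le h
      rw [dist_comm]
      exact key m k hm
  obtain ⟨z, hz⟩ := cauchySeq_tendsto_of_complete hCauchy
  -- convergence for every starting point
  have htend : ∀ x ∈ K, Tendsto (fun n => g n x) atTop (𝓝 z) := by
    intro x hx
    rw [Metric.tendsto_atTop]
    intro ε hε
    obtain ⟨N₁, hN₁⟩ := Hunif (ε / 2) (by linarith)
    obtain ⟨N₂, hN₂⟩ := (Metric.tendsto_atTop.mp hz) (ε / 2) (by linarith)
    refine ⟨max N₁ N₂, fun n hn => ?_⟩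
    have h1 : |g n x - u n| < ε / 2 := hN₁ n (le_trans (le_max_left _ _) hn) x hx x₀ hx₀
    have h2 : dist (u n) z < ε / 2 := hN₂ n (le_trans (le_max_right _ _) hn)
    calc dist (g n x) z ≤ dist (g n x) (u n) + dist (u n) z := dist_triangle _ _ _
      _ < ε / 2 + ε / 2 := by rw [Real.dist_eq]; exact add_lt_add h1 h2
      _ = ε := by ring
  -- z belongs to every image set
  have hzmem : ∀ n : ℕ, z ∈ g (n + 1) '' K := by
    intro n
    have hclosed : IsClosed (g (n + 1) '' K) := (hK.image_of_continuousOn (hgc (n + 1))).isClosed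
    refine hclosed.mem_of_tendsto hz ?_
    rw [eventually_atTop]
    refine ⟨n + 1, fun m hm => ?_⟩
    obtain ⟨k, rfl⟩ := Nat.exists_eq_add_of_le hm
    rw [hu]
    simp only
    rw [hsplit (n + 1) k x₀]
    exact ⟨_, wordComp_mapsTo f hfm _ hx₀, rfl⟩
  refine ⟨z, ?_, fun x hx => htend x hx⟩
  ext w
  simp only [Set.mem_iInter, Set.mem_singleton_iff]
  constructor
  · intro hw
    refine eq_of_forall_dist_le fun ε hε => ?_
    obtain ⟨N₁, hN₁⟩ := Hunif (ε / 2) (by linarith)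
    obtain ⟨N₂, hN₂⟩ := (Metric.tendsto_atTop.mp hz) (ε / 2) (by linarith)
    set n : ℕ := max N₁ N₂ with hn
    obtain ⟨v, hv, hvw⟩ := hw n
    have h1 : |g (n + 1) v - u (n + 1)| < ε / 2 :=
      hN₁ (n + 1) (le_trans (le_max_left _ _) (Nat.le_succ_of_le (le_refl n))) v hv x₀ hx₀
    have h2 : dist (u (n + 1)) z < ε / 2 :=
      hN₂ (n + 1) (le_trans (le_max_right _ _) (Nat.le_succ_of_le (le_refl n)))
    have : dist w z ≤ dist w (u (n + 1)) + dist (u (n + 1)) z := dist_triangle _ _ _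
    rw [← hvw] at *
    have h1' : dist (g (n + 1) v) (u (n + 1)) < ε / 2 := by rw [Real.dist_eq]; exact h1
    linarith
  · rintro rfl
    exact hzmem
end
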